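/- Let K be an algebraically closed field of characteristic 0. The polynomial p = x·y − x − y − x²·y² ∈ K[x,y] is irreducible and satisfies the identity (x − y)·p = (1 − x − x³)·y² − x²·(1 − y − y³); in particular, ((x − y)/(x²y²))·p = (1 − x − x³)/x² − (1 − y − y³)/y², so p has a non-trivial rational multiple in K(x) + K(y). -/

import Mathlib

/-!
Viewed as a polynomial in `x` over `K[y]`, `p = -y²·x² + (y - 1)·x - y` is primitive, since
`(y - 1) - y = -1`. By Gauss's lemma it is irreducible as soon as it is irreducible over `K(y)`,
i.e. as soon as its discriminant `(y - 1)² - 4y³` is not a square in `K(y)`; it is not, because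
it is a polynomial of odd degree. The remaining claims are identities of rational functions.
-/

open MvPolynomial

noncomputable section

abbrev P2 (K : Type*) [Field K] := MvPolynomial (Fin 2) K

variable {K : Type*} [Field K]

def toX (u : Polynomial K) : P2 K := Polynomial.aeval (X 0) u

def toY (u : Polynomial K) : P2 K := Polynomial.aeval (X 1) u

def embX (f : RatFunc K) : FractionRing (P2 K) :=
  algebraMap (P2 K) (FractionRing (P2 K)) (toX f.num) /
    algebraMap (P2 K) (FractionRing (P2 K)) (toX f.denom)

def embY (g : RatFunc K) : FractionRing (P2 K) :=
  algebraMap (P2 K) (FractionRing (P2 K)) (toY g.num) /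
    algebraMap (P2 K) (FractionRing (P2 K)) (toY g.denom)

/-- The rational function `(1 − t − t³)/t²`. -/
def rEx (K : Type*) [Field K] : RatFunc K :=
  algebraMap (Polynomial K) (RatFunc K) (1 - Polynomial.X - Polynomial.X ^ 3) /
    algebraMap (Polynomial K) (RatFunc K) (Polynomial.X ^ 2)

namespace Polynomial

theorem irreducible_quadratic_of_discrim_ne_sq {F : Type*} [Field F] {a b c : F} (ha : a ≠ 0)
    (h : ∀ s : F, discrim a b c ≠ s ^ 2) : Irreducible (C a * X ^ 2 + C b * X + C c) := by
  have hdeg : (C a * X ^ 2 + C b * X + C c).natDegree = 2 := by compute_degree!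
  refine irreducible_of_degree_le_three_of_not_isRoot (by simp [hdeg]) fun x hx => ?_
  apply quadratic_ne_zero_of_discrim_ne_sq h x
  simpa [IsRoot, sq] using hx

theorem IsPrimitive.irreducible_quadratic_of_discrim_ne_sq {R F : Type*} [CommRing R]
    [IsDomain R] [Field F] [Algebra R F] [IsFractionRing R F] {a b c : R}
    (hprim : (C a * X ^ 2 + C b * X + C c).IsPrimitive) (ha : a ≠ 0)
    (h : ∀ s : F, algebraMap R F (discrim a b c) ≠ s ^ 2) :
    Irreducible (C a * X ^ 2 + C b * X + C c) := by
  refine hprim.irreducible_of_irreducible_map_of_injective (IsFractionRing.injective R F) ?_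
  simp only [Polynomial.map_add, Polynomial.map_mul, map_C, Polynomial.map_pow, map_X]
  refine Polynomial.irreducible_quadratic_of_discrim_ne_sq
    ((map_ne_zero_iff _ (IsFractionRing.injective R F)).mpr ha) fun s hs => h s ?_
  rw [← hs]
  simp only [discrim, map_sub, map_mul, map_pow, map_ofNat]

end Polynomial

theorem RatFunc.algebraMap_ne_sq_of_odd_natDegree {d : Polynomial K} (hd : Odd d.natDegree)
    (s : RatFunc K) : algebraMap (Polynomial K) (RatFunc K) d ≠ s ^ 2 := by
  intro h
  have hd0 : d ≠ 0 := by rintro rfl; simp at hd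
  have hs : s * algebraMap _ _ s.denom = algebraMap _ _ s.num :=
    (eq_div_iff (RatFunc.algebraMap_ne_zero s.denom_ne_zero)).mp (RatFunc.num_div_denom s).symm
  have key : s.num ^ 2 = d * s.denom ^ 2 := by
    apply RatFunc.algebraMap_injective K
    rw [map_mul, map_pow, map_pow, h, ← mul_pow, hs]
  have hdeg := congrArg Polynomial.natDegree key
  rw [Polynomial.natDegree_pow, Polynomial.natDegree_mul hd0 (pow_ne_zero 2 s.denom_ne_zero),
    Polynomial.natDegree_pow] at hdeg
  obtain ⟨k, hk⟩ := hd
  omega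

theorem RatFunc.map_num_div_map_denom {L : Type*} [Field L] {φ : Polynomial K →+* L}
    (hφ : Function.Injective φ) (p q : Polynomial K) :
    φ (algebraMap _ (RatFunc K) p / algebraMap _ _ q).num /
        φ (algebraMap _ (RatFunc K) p / algebraMap _ _ q).denom = φ p / φ q := by
  rw [← RatFunc.liftRingHom_apply φ (nonZeroDivisors_le_comap_nonZeroDivisors_of_injective φ hφ),
    RatFunc.liftRingHom_apply_div]

theorem injective_algebraMap_comp_aeval_X {σ : Type*} (i : σ) :
    Function.Injective ((algebraMap (MvPolynomial σ K) (FractionRing (MvPolynomial σ K))).comp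
      (Polynomial.aeval (R := K) (X i : MvPolynomial σ K)).toRingHom) :=
  (IsFractionRing.injective _ _).comp (transcendental_iff_injective.mp (transcendental_X K i))

namespace Polynomial

theorem irreducible_X_mul_C_X_sub_X_sub_C_X_sub_X_sq_mul_C_X_sq [CharZero K] :
    Irreducible (X * C X - X - C X - X ^ 2 * C X ^ 2 : Polynomial (Polynomial K)) := by
  have hquad : (X * C X - X - C X - X ^ 2 * C X ^ 2 : Polynomial (Polynomial K)) =
      C (-X ^ 2) * X ^ 2 + C (X - 1) * X + C (-X) := by
    simp only [C_neg, C_pow, C_sub, C_1]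
    ring
  have hdisc : discrim (-X ^ 2) (X - 1) (-X) = ((X - 1) ^ 2 - 4 * X ^ 3 : Polynomial K) := by
    rw [discrim]
    ring
  rw [hquad]
  refine IsPrimitive.irreducible_quadratic_of_discrim_ne_sq (F := RatFunc K) ?_
    (by simp [X_ne_zero]) fun s => RatFunc.algebraMap_ne_sq_of_odd_natDegree ?_ s
  · intro r hr
    rw [C_dvd_iff_dvd_coeff] at hr
    have hunit := dvd_add (hr 0) (hr 1)
    simp only [coeff_add, coeff_C_mul, coeff_X_pow, coeff_X, coeff_C] at hunit
    norm_num at hunit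
    rw [show -X + (X - 1) = (-1 : Polynomial K) by ring] at hunit
    exact isUnit_of_dvd_unit hunit isUnit_one.neg
  · rw [hdisc, show ((X - 1) ^ 2 - 4 * X ^ 3 : Polynomial K).natDegree = 3 by compute_degree!]
    exact ⟨1, rfl⟩

end Polynomial

theorem MvPolynomial.irreducible_X_mul_X_sub_X_sub_X_sub_X_sq_mul_X_sq [CharZero K] :
    Irreducible (X 0 * X 1 - X 0 - X 1 - X 0 ^ 2 * X 1 ^ 2 : MvPolynomial (Fin 2) K) := by
  let E : MvPolynomial (Fin 2) K ≃ₐ[K] Polynomial (Polynomial K) :=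
    (finSuccEquiv K 1).trans (Polynomial.mapAlgEquiv (uniqueAlgEquiv K (Fin 1)))
  have hE : E (X 0 * X 1 - X 0 - X 1 - X 0 ^ 2 * X 1 ^ 2) =
      Polynomial.X * Polynomial.C Polynomial.X - Polynomial.X - Polynomial.C Polynomial.X
        - Polynomial.X ^ 2 * Polynomial.C Polynomial.X ^ 2 := by
    have hX1 : finSuccEquiv K 1 (X 1) = Polynomial.C (X 0) := finSuccEquiv_X_succ (j := 0)
    simp [E, hX1, finSuccEquiv_X_zero]
  exact (MulEquiv.irreducible_iff E).mp
    (hE ▸ Polynomial.irreducible_X_mul_C_X_sub_X_sub_C_X_sub_X_sq_mul_C_X_sq)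

theorem embX_algebraMap_div (p q : Polynomial K) :
    embX (algebraMap _ _ p / algebraMap _ _ q) =
      algebraMap (P2 K) (FractionRing (P2 K)) (toX p) /
        algebraMap (P2 K) (FractionRing (P2 K)) (toX q) :=
  RatFunc.map_num_div_map_denom (injective_algebraMap_comp_aeval_X 0) p q

theorem embY_algebraMap_div (p q : Polynomial K) :
    embY (algebraMap _ _ p / algebraMap _ _ q) =
      algebraMap (P2 K) (FractionRing (P2 K)) (toY p) /
        algebraMap (P2 K) (FractionRing (P2 K)) (toY q) :=
  RatFunc.map_num_div_map_denom (injective_algebraMap_comp_aeval_X 1) p q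

theorem statement19_general [CharZero K] :
    Irreducible (X 0 * X 1 - X 0 - X 1 - X 0 ^ 2 * X 1 ^ 2 : P2 K) ∧
    ((X 0 - X 1) * (X 0 * X 1 - X 0 - X 1 - X 0 ^ 2 * X 1 ^ 2) : P2 K) =
      (1 - X 0 - X 0 ^ 3) * X 1 ^ 2 - X 0 ^ 2 * (1 - X 1 - X 1 ^ 3) ∧
    (algebraMap (P2 K) (FractionRing (P2 K)) (X 0 - X 1) /
        algebraMap (P2 K) (FractionRing (P2 K)) (X 0 ^ 2 * X 1 ^ 2)) *
      algebraMap (P2 K) (FractionRing (P2 K))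
        (X 0 * X 1 - X 0 - X 1 - X 0 ^ 2 * X 1 ^ 2) =
      embX (rEx K) - embY (rEx K) ∧
    (algebraMap (P2 K) (FractionRing (P2 K)) (X 0 - X 1) /
        algebraMap (P2 K) (FractionRing (P2 K)) (X 0 ^ 2 * X 1 ^ 2)) ≠ 0 := by
  have hX : ∀ i, algebraMap (P2 K) (FractionRing (P2 K)) (X i) ≠ 0 := fun i =>
    IsFractionRing.to_map_ne_zero_of_mem_nonZeroDivisors
      (mem_nonZeroDivisors_of_ne_zero (X_ne_zero i))
  have hxy : algebraMap (P2 K) (FractionRing (P2 K)) (X 0) ≠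
      algebraMap (P2 K) (FractionRing (P2 K)) (X 1) := fun h =>
    absurd (X_injective (IsFractionRing.injective (P2 K) (FractionRing (P2 K)) h)) (by decide)
  refine ⟨irreducible_X_mul_X_sub_X_sub_X_sub_X_sq_mul_X_sq, by ring, ?_, ?_⟩
  · rw [rEx, embX_algebraMap_div, embY_algebraMap_div]
    simp only [toX, toY, map_sub, map_mul, map_pow, map_one, Polynomial.aeval_X]
    field_simp [hX 0, hX 1]
    ring
  · simp only [map_sub, map_mul, map_pow]
    exact div_ne_zero (sub_ne_zero.mpr hxy)
      (mul_ne_zero (pow_ne_zero 2 (hX 0)) (pow_ne_zero 2 (hX 1)))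

/-- The polynomial `p = xy − x − y − x²y²` is irreducible, satisfies
`(x − y)·p = (1 − x − x³)·y² − x²·(1 − y − y³)`, and consequently
`((x − y)/(x²y²))·p = (1 − x − x³)/x² − (1 − y − y³)/y²`, a nonzero element of
`K(x) + K(y)`; so `p` has a non-trivial rational multiple in `K(x) + K(y)`. -/
theorem statement19 [IsAlgClosed K] [CharZero K] :
    Irreducible (X 0 * X 1 - X 0 - X 1 - X 0 ^ 2 * X 1 ^ 2 : P2 K) ∧
    ((X 0 - X 1) * (X 0 * X 1 - X 0 - X 1 - X 0 ^ 2 * X 1 ^ 2) : P2 K) =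
      (1 - X 0 - X 0 ^ 3) * X 1 ^ 2 - X 0 ^ 2 * (1 - X 1 - X 1 ^ 3) ∧
    (algebraMap (P2 K) (FractionRing (P2 K)) (X 0 - X 1) /
        algebraMap (P2 K) (FractionRing (P2 K)) (X 0 ^ 2 * X 1 ^ 2)) *
      algebraMap (P2 K) (FractionRing (P2 K))
        (X 0 * X 1 - X 0 - X 1 - X 0 ^ 2 * X 1 ^ 2) =
      embX (rEx K) - embY (rEx K) ∧
    (algebraMap (P2 K) (FractionRing (P2 K)) (X 0 - X 1) /
        algebraMap (P2 K) (FractionRing (P2 K)) (X 0 ^ 2 * X 1 ^ 2)) ≠ 0 :=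
  statement19_general
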